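/- Let a, b, c be real numbers with 0 < a ≤ b ≤ c and c < a + b. In the plane let B = (−a/2, 0), C = (a/2, 0), and let A = (A_x, A_y) be a point with A_y > 0, dist(A, C) = b and dist(A, B) = c. Define φ* by tan φ* = 2·√(c² − (b−a)²) / ( √((3b−a)² − c²) + √((b+a)² − c²) ), and set D* = (0, (a/2)·tan φ*). Then 2·dist(B, D*)/a = (dist(A, D*) + dist(B, D*))/b. -/

import Mathlib

/-!
Squaring `(2b − a)·|BD*| = a·|AD*|` and using the apex
coordinates `2a·A_x = c² − b²`, `2a·A_y = √(c² − (b−a)²)·√((b+a)² − c²)` turns the balance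
condition into the quadratic `4b(b−a)·t² + 2√(c² − (b−a)²)√((b+a)² − c²)·t = 2(c² − (b−a)²)`
in `t = tan φ*`. Since `((3b−a)² − c²) − ((b+a)² − c²) = 8b(b−a)`, the given value of `tan φ*`
is the positive root of this quadratic in rationalized form.
-/

/-- A point of the plane given by its two coordinates. -/
noncomputable def pt (x y : ℝ) : EuclideanSpace ℝ (Fin 2) := !₂[x, y]

lemma sq_dist_pt (x y u v : ℝ) : dist (pt x y) (pt u v) ^ 2 = (x - u) ^ 2 + (y - v) ^ 2 := by
  simp [pt, EuclideanSpace.dist_eq, Fin.sum_univ_two, Real.dist_eq, sq_abs,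
    Real.sq_sqrt (add_nonneg (sq_nonneg _) (sq_nonneg _))]

lemma two_mul_height_eq {a b c x y : ℝ} (ha : 0 ≤ a) (hy : 0 ≤ y) (hr : 0 ≤ c ^ 2 - (b - a) ^ 2)
    (hb : (x - a / 2) ^ 2 + y ^ 2 = b ^ 2) (hc : (x + a / 2) ^ 2 + y ^ 2 = c ^ 2) :
    2 * a * y = Real.sqrt (c ^ 2 - (b - a) ^ 2) * Real.sqrt ((b + a) ^ 2 - c ^ 2) := by
  have hx : 2 * a * x = c ^ 2 - b ^ 2 := by linear_combination hc - hb
  have hsq : (2 * a * y) ^ 2 = (c ^ 2 - (b - a) ^ 2) * ((b + a) ^ 2 - c ^ 2) := by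
    linear_combination 4 * a ^ 2 * hb - (2 * a * x + c ^ 2 - b ^ 2 - 2 * a ^ 2) * hx
  rw [← Real.sqrt_mul hr, ← hsq, Real.sqrt_sq (by positivity)]

/-- `t = 2 s₁ / (s₂ + s₃)` is the root `s₁ (s₂ − s₃) / (4k)` of `4k t² + 2 s₁ s₃ t = 2 s₁²`,
rationalized so that it makes sense also for `k = 0`. -/
lemma quadratic_eq_of_mul_add_eq {k s₁ s₂ s₃ t : ℝ} (hS : s₂ + s₃ ≠ 0)
    (hk : s₂ ^ 2 - s₃ ^ 2 = 8 * k) (ht : t * (s₂ + s₃) = 2 * s₁) :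
    4 * k * t ^ 2 + 2 * s₁ * s₃ * t = 2 * s₁ ^ 2 := by
  have h : (4 * k * t ^ 2 + 2 * s₁ * s₃ * t - 2 * s₁ ^ 2) * (s₂ + s₃) ^ 2 = 0 := by
    linear_combination (4 * k * (t * (s₂ + s₃) + 2 * s₁) + 2 * s₁ * s₃ * (s₂ + s₃)) * ht
      - 2 * s₁ ^ 2 * hk
  linear_combination (mul_eq_zero.mp h).resolve_right (pow_ne_zero 2 hS)

lemma balance_of_quadratic {a b c x y t : ℝ} (ha : 0 ≤ a) (hab : a ≤ 2 * b)
    (hb : (x - a / 2) ^ 2 + y ^ 2 = b ^ 2) (hc : (x + a / 2) ^ 2 + y ^ 2 = c ^ 2)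
    (ht : 4 * (b * (b - a)) * t ^ 2 + 4 * a * y * t = 2 * (c ^ 2 - (b - a) ^ 2)) :
    (2 * b - a) * dist (pt (-a / 2) 0) (pt 0 (a / 2 * t)) =
      a * dist (pt x y) (pt 0 (a / 2 * t)) := by
  rw [← pow_left_inj₀ (mul_nonneg (by linarith) dist_nonneg) (mul_nonneg ha dist_nonneg)
    two_ne_zero, mul_pow, mul_pow, sq_dist_pt, sq_dist_pt]
  linear_combination a ^ 2 / 4 * ht - a ^ 2 / 2 * (hb + hc)

theorem balance_point_equality
    (a b c Ax Ay : ℝ) (ha : 0 < a) (hab : a ≤ b) (hbc : b ≤ c) (htri : c < a + b)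
    (A B C : EuclideanSpace ℝ (Fin 2))
    (hB : B = pt (-a / 2) 0) (hC : C = pt (a / 2) 0) (hA : A = pt Ax Ay)
    (hAy : 0 < Ay) (hAC : dist A C = b) (hAB : dist A B = c)
    (φ : ℝ)
    (hφ : Real.tan φ = 2 * Real.sqrt (c ^ 2 - (b - a) ^ 2) /
        (Real.sqrt ((3 * b - a) ^ 2 - c ^ 2) + Real.sqrt ((b + a) ^ 2 - c ^ 2)))
    (Dstar : EuclideanSpace ℝ (Fin 2))
    (hD : Dstar = pt 0 ((a / 2) * Real.tan φ)) :
    2 * dist B Dstar / a = (dist A Dstar + dist B Dstar) / b := by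
  subst hA hB hC hD
  have hr₁ : 0 < c ^ 2 - (b - a) ^ 2 := by nlinarith
  have hr₂ : 0 < (3 * b - a) ^ 2 - c ^ 2 := by nlinarith
  have hr₃ : 0 < (b + a) ^ 2 - c ^ 2 := by nlinarith
  have hb : (Ax - a / 2) ^ 2 + Ay ^ 2 = b ^ 2 := by rw [← hAC, sq_dist_pt]; ring
  have hc : (Ax + a / 2) ^ 2 + Ay ^ 2 = c ^ 2 := by rw [← hAB, sq_dist_pt]; ring
  have hS : 0 < Real.sqrt ((3 * b - a) ^ 2 - c ^ 2) + Real.sqrt ((b + a) ^ 2 - c ^ 2) := by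
    positivity
  have hroot := quadratic_eq_of_mul_add_eq (k := b * (b - a)) (t := Real.tan φ)
    (s₁ := Real.sqrt (c ^ 2 - (b - a) ^ 2)) hS.ne'
    (by rw [Real.sq_sqrt hr₂.le, Real.sq_sqrt hr₃.le]; ring)
    (by rw [hφ]; field_simp)
  have hy := two_mul_height_eq ha.le hAy.le hr₁.le hb hc
  have hbal := balance_of_quadratic (t := Real.tan φ) ha.le (by linarith) hb hc
    (by linear_combination hroot + 2 * Real.tan φ * hy + 2 * Real.sq_sqrt hr₁.le)
  rw [div_eq_div_iff ha.ne' (by linarith)]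
  linarith
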